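/- arXiv:1511.07268 — 4 statements merged into one kernel-verified Lean document; each statement's English description precedes it below -/
import Mathlib

section
/- For every positive integer n, all π, ρ ∈ Sym_n, and every integer 0 ≤ r ≤ n, the toric maps satisfy f̄_r(ρ∘π) = f̄_r(ρ) ∘ f̄_s(π), where s = ρ⁻¹(r) (interpreting ρ⁻¹(0) = 0 and f̄_0 as the identity map). In particular, f̄ is a skew-morphism of the group Sym_n with power function π ↦ π⁻¹(1). -/
/-!
On `{0,1,…,n} = ℤ/(n+1)` the rotation `α^k` is the translation `t_k = (· + k)`, so
`[0 f̄_r(π)] = t_{-r} ∘ [0 π] ∘ t_{[0 π]⁻¹(r)}`. For a permutation `σ` of any abelian group put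
`σ^g = t_{-g} ∘ σ ∘ t_{σ⁻¹ g}` (`σ.toricShift g` below). Then `(σ ∘ τ)^g = σ^g ∘ τ^{σ⁻¹ g}` and
`(σ^g)^h = σ^{g+h}`, and `σ^0 = σ` when `σ` fixes `0`. Transported along the injective
homomorphism `π ↦ [0 π]`, the first identity is the skew-morphism law and the other two give
`f̄_r = f̄^r`.
-/

open Fin.NatCast

def ext0 {n : ℕ} (π : Equiv.Perm (Fin n)) : Equiv.Perm (Fin (n + 1)) where
  toFun x := Fin.cases 0 (fun t => (π t).succ) x
  invFun x := Fin.cases 0 (fun t => (π⁻¹ t).succ) x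
  left_inv x := by
    cases x using Fin.cases with
    | zero => simp
    | succ t => simp
  right_inv x := by
    cases x using Fin.cases with
    | zero => simp
    | succ t => simp

theorem ext0_zero {n : ℕ} (π : Equiv.Perm (Fin n)) : ext0 π 0 = 0 := by
  simp [ext0]

theorem finRotate_pow_apply {n : ℕ} (m : ℕ) (x : Fin (n + 1)) :
    ((finRotate (n + 1)) ^ m) x = x + (m : Fin (n + 1)) := by
  induction m with
  | zero => simp
  | succ m ih =>
      rw [pow_succ', Equiv.Perm.mul_apply, finRotate_succ_apply, ih]
      push_cast
      simp only [Nat.cast_succ, add_assoc]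

/-- The auxiliary permutation `α^(n+1-r) ∘ [0 π] ∘ α^(π⁻¹(r))` of `{0,1,…,n}`. -/
def toricAux (n r : ℕ) (π : Equiv.Perm (Fin n)) : Equiv.Perm (Fin (n + 1)) :=
  (finRotate (n + 1)) ^ (n + 1 - r) * ext0 π *
    (finRotate (n + 1)) ^ (((ext0 π)⁻¹ (r : Fin (n + 1))) : ℕ)

theorem toricAux_apply_zero (n r : ℕ) (hr : r ≤ n) (π : Equiv.Perm (Fin n)) :
    toricAux n r π 0 = 0 := by
  unfold toricAux
  have h : r + (n + 1 - r) = n + 1 := by omega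
  rw [Equiv.Perm.mul_apply, Equiv.Perm.mul_apply, finRotate_pow_apply,
    finRotate_pow_apply, zero_add, Fin.cast_val_eq_self,
    ← Equiv.Perm.mul_apply, mul_inv_cancel, Equiv.Perm.one_apply, ← Nat.cast_add, h, Fin.natCast_self]

/-- Restriction of a permutation of `{0,1,…,n}` fixing `0` to a permutation of `{1,…,n}`. -/
def unext0 {n : ℕ} (τ : Equiv.Perm (Fin (n + 1))) (h : τ 0 = 0) : Equiv.Perm (Fin n) where
  toFun t := (τ t.succ).pred (by
    intro hc
    exact Fin.succ_ne_zero t (τ.injective (hc.trans h.symm)))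
  invFun t := (τ⁻¹ t.succ).pred (by
    intro hc
    have h' : τ⁻¹ 0 = 0 := by
      conv_lhs => rw [← h]
      exact τ.symm_apply_apply 0
    exact Fin.succ_ne_zero t (τ⁻¹.injective (hc.trans h'.symm)))
  left_inv t := by
    apply Fin.succ_injective
    rw [Fin.succ_pred, Fin.succ_pred]
    exact τ.symm_apply_apply _
  right_inv t := by
    apply Fin.succ_injective
    rw [Fin.succ_pred, Fin.succ_pred]
    exact τ.apply_symm_apply _

/-- The toric map `f̄_r` on `Sym_n`. -/
def toricMap (n r : ℕ) (hr : r ≤ n) (π : Equiv.Perm (Fin n)) : Equiv.Perm (Fin n) :=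
  unext0 (toricAux n r π) (toricAux_apply_zero n r hr π)

namespace Equiv.Perm

variable {G : Type*} [AddCommGroup G]

def toricShift (σ : Perm G) (g : G) : Perm G :=
  Equiv.addRight (-g) * σ * Equiv.addRight (σ⁻¹ g)

theorem toricShift_apply (σ : Perm G) (g x : G) : σ.toricShift g x = σ (x + σ⁻¹ g) - g := by
  simp [toricShift, sub_eq_add_neg]

theorem toricShift_inv_apply (σ : Perm G) (g y : G) :
    (σ.toricShift g)⁻¹ y = σ⁻¹ (y + g) - σ⁻¹ g := by
  rw [Perm.inv_eq_iff_eq, toricShift_apply]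
  simp

theorem toricShift_zero {σ : Perm G} (hσ : σ 0 = 0) : σ.toricShift 0 = σ := by
  have hσ' : σ⁻¹ 0 = 0 := by rw [inv_eq_iff_eq, hσ]
  ext x
  rw [toricShift_apply, hσ', add_zero, sub_zero]

theorem toricShift_mul (σ τ : Perm G) (g : G) :
    (σ * τ).toricShift g = σ.toricShift g * τ.toricShift (σ⁻¹ g) := by
  ext x
  simp [toricShift_apply, mul_inv_rev]

theorem toricShift_toricShift (σ : Perm G) (g h : G) :
    (σ.toricShift g).toricShift h = σ.toricShift (g + h) := by
  ext x
  simp only [toricShift_apply, toricShift_inv_apply, add_assoc, sub_add_cancel, add_comm h g, sub_sub]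

end Equiv.Perm

section toricMap

variable {n : ℕ}

theorem ext0_mul (ρ π : Equiv.Perm (Fin n)) : ext0 (ρ * π) = ext0 ρ * ext0 π := by
  ext x
  cases x using Fin.cases <;> simp [ext0]

theorem ext0_injective : Function.Injective (ext0 (n := n)) := by
  intro σ τ h
  refine Equiv.ext fun t => ?_
  simpa [ext0] using DFunLike.congr_fun h t.succ

theorem ext0_unext0 (τ : Equiv.Perm (Fin (n + 1))) (h : τ 0 = 0) : ext0 (unext0 τ h) = τ := by
  ext x
  cases x using Fin.cases with
  | zero => rw [ext0_zero, h]
  | succ t => simp [ext0, unext0]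

theorem toricAux_eq_toricShift {r : ℕ} (hr : r ≤ n) (π : Equiv.Perm (Fin n)) :
    toricAux n r π = (ext0 π).toricShift (r : Fin (n + 1)) := by
  have hneg : ((n + 1 - r : ℕ) : Fin (n + 1)) = -(r : Fin (n + 1)) := by
    rw [eq_neg_iff_add_eq_zero, ← Nat.cast_add, Nat.sub_add_cancel (by omega), Fin.natCast_self]
  ext x
  simp [toricAux, Equiv.Perm.toricShift_apply, finRotate_pow_apply, hneg, sub_eq_add_neg]

theorem ext0_toricMap {r : ℕ} (hr : r ≤ n) (π : Equiv.Perm (Fin n)) :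
    ext0 (toricMap n r hr π) = (ext0 π).toricShift (r : Fin (n + 1)) := by
  rw [toricMap, ext0_unext0, toricAux_eq_toricShift hr]

theorem toricMap_mul {r : ℕ} (hr : r ≤ n) (ρ π : Equiv.Perm (Fin n)) :
    toricMap n r hr (ρ * π) = toricMap n r hr ρ *
      toricMap n ((ext0 ρ)⁻¹ (r : Fin (n + 1))).val (Nat.lt_succ_iff.mp (Fin.is_lt _)) π := by
  apply ext0_injective
  simp only [ext0_mul, ext0_toricMap, Fin.cast_val_eq_self, Equiv.Perm.toricShift_mul]

theorem toricMap_zero (π : Equiv.Perm (Fin n)) : toricMap n 0 (Nat.zero_le n) π = π := by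
  apply ext0_injective
  rw [ext0_toricMap, Nat.cast_zero, Equiv.Perm.toricShift_zero (ext0_zero π)]

theorem toricMap_one_toricMap {r : ℕ} (hn : 1 ≤ n) (hr : r < n) (π : Equiv.Perm (Fin n)) :
    toricMap n 1 hn (toricMap n r hr.le π) = toricMap n (r + 1) hr π := by
  apply ext0_injective
  simp only [ext0_toricMap, Equiv.Perm.toricShift_toricShift, Nat.cast_add, Nat.cast_one]

theorem toricMap_eq_iterate (hn : 1 ≤ n) {r : ℕ} (hr : r ≤ n) :
    toricMap n r hr = (toricMap n 1 hn)^[r] := by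
  induction r with
  | zero => exact funext toricMap_zero
  | succ r ih =>
    funext π
    rw [← toricMap_one_toricMap hn hr, ih, Function.iterate_succ_apply']

end toricMap

/-- For every positive `n`, all `π, ρ ∈ Sym_n` and `0 ≤ r ≤ n`,
`f̄_r(ρ∘π) = f̄_r(ρ) ∘ f̄_s(π)` where `s = ρ⁻¹(r)` (with `ρ⁻¹(0) = 0`).
In particular, `f̄` is a skew-morphism of `Sym_n` with power function `π ↦ π⁻¹(1)`. -/
theorem stmt_7 (n : ℕ) (hn : 1 ≤ n) :
    (∀ (r : ℕ) (hr : r ≤ n) (ρ π : Equiv.Perm (Fin n)),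
      toricMap n r hr (ρ * π)
        = toricMap n r hr ρ *
            toricMap n (((ext0 ρ)⁻¹ (r : Fin (n + 1))).val)
              (Nat.lt_succ_iff.mp (Fin.is_lt _)) π) ∧
    (∀ ρ π : Equiv.Perm (Fin n),
      toricMap n 1 hn (ρ * π)
        = toricMap n 1 hn ρ *
            (toricMap n 1 hn)^[((ext0 ρ)⁻¹ ((1 : ℕ) : Fin (n + 1))).val] π) := by
  refine ⟨fun r hr ρ π => toricMap_mul hr ρ π, fun ρ π => ?_⟩
  rw [toricMap_mul]
  exact congrArg _ (congrFun (toricMap_eq_iterate hn _) π)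
end

section
/- For every positive integer n, no edge of Cay(Sym_n, T_n) has one endpoint in B and the other in S^∆: for every σ ∈ B and every τ ∈ S^∆, the permutation σ⁻¹∘τ is not a block transposition. -/
/-! The block transposition `σ(i,j,k)` fixes everything outside `i+1, …, k` and sends `i+1` to
`j+1` and `k` to `j`; in `Fin n` these points are `i`, `k-1` and `j`, `j-1`. Every element of `B`
moves both `1` and `n`, while every element of `S^∆` fixes them. So if `σ⁻¹ ∘ τ = ρ` were a block
transposition, `ρ` would move `1` and `n`, hence be a rotation `σ(0,b,n) ∈ B`; comparing the image
of `1` gives `ρ = σ⁻¹`, i.e. `τ = id`, which no block transposition is. -/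

/-- Auxiliary function: the action of the block transposition with cut points
`(i,j,k)` on `{1,…,n}`, written 1-based. -/
def btFun (i j k t : ℕ) : ℕ :=
  if t ≤ i ∨ k < t then t
  else if t ≤ k - j + i then t + j - i
  else t + j - k

theorem btFun_lb {i j k t : ℕ} (h1 : 1 ≤ t) : 1 ≤ btFun i j k t := by
  unfold btFun; split_ifs <;> omega

theorem btFun_ub {i j k t n : ℕ} (ht : t ≤ n) (hjk : j ≤ k) (hkn : k ≤ n) :
    btFun i j k t ≤ n := by
  unfold btFun; split_ifs <;> omega

theorem btFun_inv {i j k : ℕ} (hij : i < j) (hjk : j < k) (t : ℕ) :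
    btFun i (k - j + i) k (btFun i j k t) = t := by
  unfold btFun; split_ifs <;> omega

theorem btFun_inv' {i j k : ℕ} (hij : i < j) (hjk : j < k) (t : ℕ) :
    btFun i j k (btFun i (k - j + i) k t) = t := by
  have h := btFun_inv (i := i) (j := k - j + i) (k := k) (by omega) (by omega) t
  have e : k - (k - j + i) + i = j := by omega
  rwa [e] at h

/-- The block transposition `σ(i,j,k)` as a permutation of `Fin n`,
where `t : Fin n` encodes the element `t.val + 1` of `{1,…,n}`. -/
def blockT (n i j k : ℕ) (hij : i < j) (hjk : j < k) (hkn : k ≤ n) :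
    Equiv.Perm (Fin n) where
  toFun t := ⟨btFun i j k (t.1 + 1) - 1, by
    have h0 := t.isLt
    have h1 := btFun_lb (i := i) (j := j) (k := k) (t := t.1 + 1) (by omega)
    have h2 := btFun_ub (i := i) (j := j) (k := k) (t := t.1 + 1) (n := n)
      (by omega) (by omega) hkn
    omega⟩
  invFun t := ⟨btFun i (k - j + i) k (t.1 + 1) - 1, by
    have h0 := t.isLt
    have h1 := btFun_lb (i := i) (j := k - j + i) (k := k) (t := t.1 + 1) (by omega)
    have h2 := btFun_ub (i := i) (j := k - j + i) (k := k) (t := t.1 + 1) (n := n)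
      (by omega) (by omega) hkn
    omega⟩
  left_inv t := by
    have h1 := btFun_lb (i := i) (j := j) (k := k) (t := t.1 + 1) (by omega)
    have h2 := btFun_inv hij hjk (t.1 + 1)
    apply Fin.ext
    simp only
    have h3 : btFun i j k (t.1 + 1) - 1 + 1 = btFun i j k (t.1 + 1) := by omega
    rw [h3, h2]
    omega
  right_inv t := by
    have h1 := btFun_lb (i := i) (j := k - j + i) (k := k) (t := t.1 + 1) (by omega)
    have h2 := btFun_inv' hij hjk (t.1 + 1)
    apply Fin.ext
    simp only
    have h3 : btFun i (k - j + i) k (t.1 + 1) - 1 + 1 = btFun i (k - j + i) k (t.1 + 1) := by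
      omega
    rw [h3, h2]
    omega

/-- `T_n`: the set of all block transpositions on `{1,…,n}`. -/
def blockTranspositions (n : ℕ) : Set (Equiv.Perm (Fin n)) :=
  {π | ∃ (i j k : ℕ) (hij : i < j) (hjk : j < k) (hkn : k ≤ n),
      blockT n i j k hij hjk hkn = π}

theorem blockT_inv {n i j k : ℕ} (hij : i < j) (hjk : j < k) (hkn : k ≤ n) :
    (blockT n i j k hij hjk hkn)⁻¹
      = blockT n i (k - j + i) k (by omega) (by omega) hkn :=
  Equiv.ext fun _ => rfl

theorem blockTranspositions_inv_mem {n : ℕ} {π : Equiv.Perm (Fin n)}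
    (h : π ∈ blockTranspositions n) : π⁻¹ ∈ blockTranspositions n := by
  obtain ⟨i, j, k, hij, hjk, hkn, rfl⟩ := h
  exact ⟨i, k - j + i, k, by omega, by omega, hkn, (blockT_inv hij hjk hkn).symm⟩

/-- The Cayley graph `Cay(Sym_n, T_n)`. -/
def cayleyT (n : ℕ) : SimpleGraph (Equiv.Perm (Fin n)) where
  Adj π ρ := π ≠ ρ ∧ π⁻¹ * ρ ∈ blockTranspositions n
  symm := by
    constructor
    rintro π ρ ⟨hne, hmem⟩
    refine ⟨hne.symm, ?_⟩
    have h := blockTranspositions_inv_mem hmem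
    rwa [mul_inv_rev, inv_inv] at h
  loopless := ⟨fun π h => h.1 rfl⟩

/-- `B`: the set of block transpositions `σ(0,j,n)`, `1 ≤ j ≤ n-1`. -/
def Bset (n : ℕ) : Set (Equiv.Perm (Fin n)) :=
  {π | ∃ (j : ℕ) (h1 : 0 < j) (h2 : j < n), blockT n 0 j n h1 h2 le_rfl = π}

/-- `S^∆`: the block transpositions `σ(i,j,k)` with `i ≠ 0` and `k ≠ n`. -/
def Sset (n : ℕ) : Set (Equiv.Perm (Fin n)) :=
  {π | ∃ (i j k : ℕ) (hij : i < j) (hjk : j < k) (hkn : k ≤ n),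
      i ≠ 0 ∧ k ≠ n ∧ blockT n i j k hij hjk hkn = π}

/-- `L`: the block transpositions `σ(0,j,k)` with `k ≠ n`. -/
def Lset (n : ℕ) : Set (Equiv.Perm (Fin n)) :=
  {π | ∃ (j k : ℕ) (hij : 0 < j) (hjk : j < k) (hkn : k ≤ n),
      k ≠ n ∧ blockT n 0 j k hij hjk hkn = π}

/-- `F`: the block transpositions `σ(i,j,n)` with `i ≠ 0`. -/
def Fset (n : ℕ) : Set (Equiv.Perm (Fin n)) :=
  {π | ∃ (i j : ℕ) (hij : i < j) (hjn : j < n),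
      i ≠ 0 ∧ blockT n i j n hij hjn le_rfl = π}

section BlockTransposition

variable {n i j k : ℕ} (hij : i < j) (hjk : j < k) (hkn : k ≤ n)

theorem blockT_apply_val_succ (t : Fin n) :
    (blockT n i j k hij hjk hkn t : ℕ) + 1 = btFun i j k (t + 1) :=
  Nat.sub_add_cancel (btFun_lb (Nat.le_add_left 1 t))

theorem blockT_apply_of_lt {t : Fin n} (ht : (t : ℕ) < i) :
    blockT n i j k hij hjk hkn t = t := by
  have h := blockT_apply_val_succ hij hjk hkn t
  unfold btFun at h
  ext; split_ifs at h <;> omega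

theorem blockT_apply_of_le {t : Fin n} (ht : k ≤ t) :
    blockT n i j k hij hjk hkn t = t := by
  have h := blockT_apply_val_succ hij hjk hkn t
  unfold btFun at h
  ext; split_ifs at h <;> omega

theorem blockT_apply_val_of_eq {t : Fin n} (ht : (t : ℕ) = i) :
    (blockT n i j k hij hjk hkn t : ℕ) = j := by
  have h := blockT_apply_val_succ hij hjk hkn t
  unfold btFun at h
  split_ifs at h <;> omega

theorem blockT_apply_val_of_succ_eq {t : Fin n} (ht : (t : ℕ) + 1 = k) :
    (blockT n i j k hij hjk hkn t : ℕ) = j - 1 := by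
  have h := blockT_apply_val_succ hij hjk hkn t
  unfold btFun at h
  split_ifs at h <;> omega

theorem blockT_ne_one : blockT n i j k hij hjk hkn ≠ 1 := by
  intro h
  have hi := blockT_apply_val_of_eq hij hjk hkn (t := ⟨i, by omega⟩) rfl
  rw [h] at hi
  exact hij.ne hi

end BlockTransposition

theorem inv_mem_Bset {n : ℕ} {σ : Equiv.Perm (Fin n)} (hσ : σ ∈ Bset n) : σ⁻¹ ∈ Bset n := by
  obtain ⟨j, hj, hjn, rfl⟩ := hσ
  exact ⟨n - j, by omega, by omega, (blockT_inv hj hjn le_rfl).symm⟩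

section Bset

variable {n : ℕ} {σ : Equiv.Perm (Fin n)} (hσ : σ ∈ Bset n) {t : Fin n}
include hσ

theorem apply_ne_self_of_mem_Bset_of_val_eq_zero (ht : (t : ℕ) = 0) : σ t ≠ t := by
  obtain ⟨j, hj, hjn, rfl⟩ := hσ
  have h := blockT_apply_val_of_eq hj hjn le_rfl ht
  exact fun h' => by rw [h'] at h; omega

theorem apply_ne_self_of_mem_Bset_of_val_succ_eq (ht : (t : ℕ) + 1 = n) : σ t ≠ t := by
  obtain ⟨j, hj, hjn, rfl⟩ := hσ
  have h := blockT_apply_val_of_succ_eq hj hjn le_rfl ht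
  exact fun h' => by rw [h'] at h; omega

theorem eq_of_mem_Bset_of_apply_eq {ρ : Equiv.Perm (Fin n)} (hρ : ρ ∈ Bset n)
    (ht : (t : ℕ) = 0) (h : σ t = ρ t) : σ = ρ := by
  obtain ⟨j, hj, hjn, rfl⟩ := hσ
  obtain ⟨b, hb, hbn, rfl⟩ := hρ
  have hjb : j = b := by
    rw [← blockT_apply_val_of_eq hj hjn le_rfl ht, ← blockT_apply_val_of_eq hb hbn le_rfl ht, h]
  subst hjb
  rfl

end Bset

theorem mem_Bset_of_apply_ne_self {n : ℕ} {ρ : Equiv.Perm (Fin n)}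
    (hρ : ρ ∈ blockTranspositions n) {s t : Fin n} (hs : (s : ℕ) = 0) (ht : (t : ℕ) + 1 = n)
    (hρs : ρ s ≠ s) (hρt : ρ t ≠ t) : ρ ∈ Bset n := by
  obtain ⟨a, b, c, hab, hbc, hcn, rfl⟩ := hρ
  obtain rfl : a = 0 := by
    by_contra ha
    exact hρs (blockT_apply_of_lt hab hbc hcn (by omega))
  obtain rfl : c = n := by
    by_contra hc
    exact hρt (blockT_apply_of_le hab hbc hcn (by omega))
  exact ⟨b, hab, hbc, rfl⟩

theorem stmt_11_general (n : ℕ) :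
    ∀ σ ∈ Bset n, ∀ τ ∈ Sset n, σ⁻¹ * τ ∉ blockTranspositions n := by
  rintro σ hσ τ ⟨i, j, k, hij, hjk, hkn, hi, hk, rfl⟩ hρ
  let first : Fin n := ⟨0, by omega⟩
  let last : Fin n := ⟨n - 1, by omega⟩
  have hlast : (last : ℕ) + 1 = n := by simp only [last]; omega
  have hτ_first : blockT n i j k hij hjk hkn first = first :=
    blockT_apply_of_lt hij hjk hkn (Nat.pos_of_ne_zero hi)
  have hτ_last : blockT n i j k hij hjk hkn last = last :=
    blockT_apply_of_le hij hjk hkn (by simp only [last]; omega)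
  have hσ' := inv_mem_Bset hσ
  have hρ_B : σ⁻¹ * blockT n i j k hij hjk hkn ∈ Bset n := by
    refine mem_Bset_of_apply_ne_self hρ (s := first) rfl hlast ?_ ?_
    · rw [Equiv.Perm.mul_apply, hτ_first]
      exact apply_ne_self_of_mem_Bset_of_val_eq_zero hσ' rfl
    · rw [Equiv.Perm.mul_apply, hτ_last]
      exact apply_ne_self_of_mem_Bset_of_val_succ_eq hσ' hlast
  have hρ_eq : σ⁻¹ = σ⁻¹ * blockT n i j k hij hjk hkn :=
    eq_of_mem_Bset_of_apply_eq hσ' hρ_B (t := first) rfl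
      (by rw [Equiv.Perm.mul_apply, hτ_first])
  exact blockT_ne_one hij hjk hkn (left_eq_mul.mp hρ_eq)

/-- No edge of `Cay(Sym_n, T_n)` has one endpoint in `B` and the
other in `S^∆`. -/
theorem stmt_11 (n : ℕ) (hn : 1 ≤ n) :
    ∀ σ ∈ Bset n, ∀ τ ∈ Sset n, σ⁻¹ * τ ∉ blockTranspositions n :=
  stmt_11_general n
end

section
/- Let n ≥ 4. In the block transposition graph Γ: every vertex in L ∪ F has exactly one neighbor in B; every vertex in B has exactly n-2 neighbors in L ∪ F; every vertex in F has exactly one neighbor in L; and every vertex in L has exactly one neighbor in F. -/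
/-!
Read as sequences, block transpositions are exactly the permutations
`1…i, j+1…k, i+1…j, k+1…n`, and `σ(0,m,n)` is the rotation by `m`. Framed by `0` and `n + 1`,
such a sequence has a single descent and at most three breakpoints (positions `t` with
`π (t + 1) ≠ π t + 1`). Adjacency of `σ` and `τ` means that `σ⁻¹ τ` is again a block
transposition. For the claimed edges this is an explicit product identity; for every other pair
in question `σ⁻¹ τ` has two descents or four breakpoints. So the `B`-neighbours of
`σ(0,j,k) ∈ L` and of `σ(i,j,n) ∈ F` are `σ(0,j,n)` alone, `σ(i,j,n) ∈ F` and `σ(0,i,j) ∈ L`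
are each other's only neighbours across `F` and `L`, and `σ(0,u,n) ∈ B` has
`(n - u - 1) + (u - 1) = n - 2` neighbours in `L ∪ F`.
-/

theorem btFun_cases (a b c t : ℕ) :
    (t ≤ a ∧ btFun a b c t = t) ∨
    (a < t ∧ t ≤ c - b + a ∧ btFun a b c t = t + b - a) ∨
    (c - b + a < t ∧ t ≤ c ∧ btFun a b c t = t + b - c) ∨
    (c < t ∧ btFun a b c t = t) := by
  unfold btFun; split_ifs <;> omega

theorem btFun_zero (i j k : ℕ) : btFun i j k 0 = 0 := by
  simp [btFun]

theorem btFun_descent_unique {a b c s t : ℕ}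
    (hs : btFun a b c (s + 1) < btFun a b c s) (ht : btFun a b c (t + 1) < btFun a b c t) :
    s = t := by
  unfold btFun at hs ht; split_ifs at hs ht <;> omega

theorem btFun_breakpoint {a b c t : ℕ}
    (h : btFun a b c (t + 1) ≠ btFun a b c t + 1) : t = a ∨ t = c - b + a ∨ t = c := by
  unfold btFun at h; split_ifs at h <;> omega

section blockT

variable {n i j k : ℕ} {hij : i < j} {hjk : j < k} {hkn : k ≤ n}

theorem blockT_apply_succ (t : Fin n) :
    ((blockT n i j k hij hjk hkn) t : ℕ) + 1 = btFun i j k (t + 1) :=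
  Nat.sub_add_cancel (btFun_lb (Nat.le_add_left 1 t))

theorem btFun_eq_of_blockT_eq {a b c : ℕ} {hab : a < b} {hbc : b < c} {hcn : c ≤ n}
    (h : blockT n i j k hij hjk hkn = blockT n a b c hab hbc hcn) {t : ℕ} (ht₀ : 0 < t)
    (ht : t ≤ n) : btFun i j k t = btFun a b c t := by
  obtain ⟨t, rfl⟩ : ∃ s, t = s + 1 := ⟨t - 1, by omega⟩
  have := congrArg (fun π : Equiv.Perm (Fin n) => (π ⟨t, ht⟩ : ℕ) + 1) h
  simpa only [blockT_apply_succ] using this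

theorem blockT_inj {a b c : ℕ} {hab : a < b} {hbc : b < c} {hcn : c ≤ n}
    (h : blockT n i j k hij hjk hkn = blockT n a b c hab hbc hcn) :
    i = a ∧ j = b ∧ k = c := by
  have := btFun_eq_of_blockT_eq h (t := i + 1) (by omega) (by omega)
  have := btFun_eq_of_blockT_eq h (t := a + 1) (by omega) (by omega)
  have := btFun_eq_of_blockT_eq h (t := k) (by omega) (by omega)
  have := btFun_eq_of_blockT_eq h (t := c) (by omega) (by omega)
  have := btFun_cases i j k (i + 1); have := btFun_cases a b c (i + 1)
  have := btFun_cases i j k (a + 1); have := btFun_cases a b c (a + 1)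
  have := btFun_cases i j k k; have := btFun_cases a b c k
  have := btFun_cases i j k c; have := btFun_cases a b c c
  omega

theorem blockT_mul_eq_iff {a b c x y z : ℕ} {hab : a < b} {hbc : b < c} {hcn : c ≤ n}
    {hxy : x < y} {hyz : y < z} {hzn : z ≤ n} :
    blockT n i j k hij hjk hkn * blockT n a b c hab hbc hcn = blockT n x y z hxy hyz hzn ↔
      ∀ t < n, btFun i j k (btFun a b c (t + 1)) = btFun x y z (t + 1) := by
  have key (t : Fin n) :
      ((blockT n i j k hij hjk hkn * blockT n a b c hab hbc hcn) t : ℕ) + 1 =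
        btFun i j k (btFun a b c (t + 1)) := by
    rw [Equiv.Perm.mul_apply, blockT_apply_succ, blockT_apply_succ]
  simp only [Equiv.ext_iff, Fin.ext_iff,
    ← Nat.add_right_cancel_iff (n := 1) (m := ((_ : Fin n) : ℕ)), key, blockT_apply_succ]
  exact ⟨fun h t ht => h ⟨t, ht⟩, fun h t => h t t.isLt⟩

theorem blockT_mem_blockTranspositions :
    blockT n i j k hij hjk hkn ∈ blockTranspositions n :=
  ⟨i, j, k, hij, hjk, hkn, rfl⟩

end blockT

section values

variable {a b c t : ℕ}

theorem btFun_of_le (h : t ≤ a) : btFun a b c t = t := by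
  unfold btFun; split_ifs <;> omega

theorem btFun_of_lt_of_le (hab : a < b) (h₁ : a < t) (h₂ : t ≤ c - b + a) :
    btFun a b c t = t + b - a := by
  unfold btFun; split_ifs <;> omega

theorem btFun_of_lt_of_le' (h₁ : c - b + a < t) (h₂ : t ≤ c) : btFun a b c t = t + b - c := by
  unfold btFun; split_ifs <;> omega

theorem btFun_of_lt (h : c < t) : btFun a b c t = t := by
  unfold btFun; split_ifs <;> omega

end values

/-- Position `0`, fixed by every `btFun`, is included so that it can serve as a breakpoint. -/
def IsBlockFunOn (n : ℕ) (g : ℕ → ℕ) : Prop :=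
  ∃ a b c, ∀ t ≤ n, g t = btFun a b c t

namespace IsBlockFunOn

variable {n : ℕ} {g : ℕ → ℕ}

theorem descent_unique (hg : IsBlockFunOn n g) {s t : ℕ} (hs : s < n) (ht : t < n)
    (hds : g (s + 1) < g s) (hdt : g (t + 1) < g t) : s = t := by
  obtain ⟨a, b, c, H⟩ := hg
  rw [H s hs.le, H (s + 1) hs] at hds
  rw [H t ht.le, H (t + 1) ht] at hdt
  exact btFun_descent_unique hds hdt

theorem not_four_breakpoints (hg : IsBlockFunOn n g) {s₁ s₂ s₃ s₄ : ℕ}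
    (h₁₂ : s₁ < s₂) (h₂₃ : s₂ < s₃) (h₃₄ : s₃ < s₄) (h₄ : s₄ < n)
    (hb₁ : g (s₁ + 1) ≠ g s₁ + 1) (hb₂ : g (s₂ + 1) ≠ g s₂ + 1)
    (hb₃ : g (s₃ + 1) ≠ g s₃ + 1) (hb₄ : g (s₄ + 1) ≠ g s₄ + 1) : False := by
  obtain ⟨a, b, c, H⟩ := hg
  have breakpoint {s : ℕ} (hs : s < n) (hb : g (s + 1) ≠ g s + 1) :
      s = a ∨ s = c - b + a ∨ s = c := by
    rw [H s hs.le, H (s + 1) hs] at hb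
    exact btFun_breakpoint hb
  have := breakpoint (by omega) hb₁
  have := breakpoint (by omega) hb₂
  have := breakpoint (by omega) hb₃
  have := breakpoint h₄ hb₄
  omega

end IsBlockFunOn

theorem isBlockFunOn_of_inv_mul_mem {n i j k x y z : ℕ}
    {hij : i < j} {hjk : j < k} {hkn : k ≤ n} {hxy : x < y} {hyz : y < z} {hzn : z ≤ n}
    (h : (blockT n i j k hij hjk hkn)⁻¹ * blockT n x y z hxy hyz hzn ∈ blockTranspositions n) :
    IsBlockFunOn n (btFun i (k - j + i) k ∘ btFun x y z) := by
  obtain ⟨a, b, c, hab, hbc, hcn, he⟩ := h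
  rw [blockT_inv, eq_comm, blockT_mul_eq_iff] at he
  refine ⟨a, b, c, fun t ht => ?_⟩
  rcases t with _ | t
  · simp only [Function.comp_apply, btFun_zero]
  · exact he t ht

theorem inv_mul_mem_of_mul_eq {n : ℕ} {σ ρ τ : Equiv.Perm (Fin n)} (h : σ * ρ = τ)
    (hρ : ρ ∈ blockTranspositions n) : σ⁻¹ * τ ∈ blockTranspositions n := by
  rwa [← h, inv_mul_cancel_left]

section identities

variable {n i j k : ℕ}

theorem blockT_prefix_mul_eq_rotation (hj : 0 < j) (hjk : j < k) (hkn : k < n) :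
    blockT n 0 j k hj hjk hkn.le * blockT n (k - j) k n (by omega) hkn le_rfl =
      blockT n 0 j n hj (by omega) le_rfl :=
  blockT_mul_eq_iff.mpr fun t ht => by unfold btFun; split_ifs <;> omega

theorem blockT_suffix_mul_eq_rotation (hi : 0 < i) (hij : i < j) (hjn : j < n) :
    blockT n i j n hij hjn le_rfl * blockT n 0 i (n - j + i) hi (by omega) (by omega) =
      blockT n 0 j n (by omega) hjn le_rfl :=
  blockT_mul_eq_iff.mpr fun t ht => by unfold btFun; split_ifs <;> omega

theorem blockT_suffix_mul_rotation_eq_prefix (hi : 0 < i) (hij : i < j) (hjn : j < n) :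
    blockT n i j n hij hjn le_rfl * blockT n 0 (n - j + i) n (by omega) (by omega) le_rfl =
      blockT n 0 i j hi hij hjn.le :=
  blockT_mul_eq_iff.mpr fun t ht => by unfold btFun; split_ifs <;> omega

end identities

section adjacency

variable {n i j k m : ℕ}

/-- Rotating by `m` and then undoing `σ(0,j,k)` creates a descent where the rotation wraps around
and, unless `m = j`, a second one where the value `j` is followed by `j + 1`. -/
theorem inv_mul_rotation_mem_iff_of_prefix (hj : 0 < j) (hjk : j < k) (hkn : k < n) (hm : 0 < m)
    (hmn : m < n) :
    (blockT n 0 j k hj hjk hkn.le)⁻¹ * blockT n 0 m n hm hmn le_rfl ∈ blockTranspositions n ↔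
      m = j := by
  refine ⟨fun h => ?_, ?_⟩
  · have hg := isBlockFunOn_of_inv_mul_mem h
    have wrap : btFun 0 (k - j + 0) k (btFun 0 m n (n - m + 1)) <
        btFun 0 (k - j + 0) k (btFun 0 m n (n - m)) := by
      simp (disch := omega) only [btFun_of_lt_of_le, btFun_of_lt_of_le', btFun_of_lt]
      omega
    by_contra hne
    rcases Nat.lt_or_gt_of_ne hne with hlt | hgt
    · have := hg.descent_unique (s := j - m) (t := n - m) (by omega) (by omega)
        (by
          simp (disch := omega) only [Function.comp_apply, btFun_of_lt_of_le, btFun_of_lt_of_le']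
          omega) wrap
      omega
    · have := hg.descent_unique (s := n - m + j) (t := n - m) (by omega) (by omega)
        (by
          simp (disch := omega) only [Function.comp_apply, btFun_of_lt_of_le, btFun_of_lt_of_le']
          omega) wrap
      omega
  · rintro rfl
    exact inv_mul_mem_of_mul_eq (blockT_prefix_mul_eq_rotation hj hjk hkn)
      blockT_mem_blockTranspositions

/-- The same two descents appear when `σ(i,j,n)` is undone after rotating by `m`. -/
theorem inv_mul_rotation_mem_iff_of_suffix (hi : 0 < i) (hij : i < j) (hjn : j < n) (hm : 0 < m)
    (hmn : m < n) :
    (blockT n i j n hij hjn le_rfl)⁻¹ * blockT n 0 m n hm hmn le_rfl ∈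
      blockTranspositions n ↔ m = j := by
  refine ⟨fun h => ?_, ?_⟩
  · have hg := isBlockFunOn_of_inv_mul_mem h
    have wrap : btFun i (n - j + i) n (btFun 0 m n (n - m + 1)) <
        btFun i (n - j + i) n (btFun 0 m n (n - m)) := by
      simp (disch := omega) only [btFun_of_le, btFun_of_lt_of_le, btFun_of_lt_of_le']
      omega
    by_contra hne
    rcases Nat.lt_or_gt_of_ne hne with hlt | hgt
    · have := hg.descent_unique (s := j - m) (t := n - m) (by omega) (by omega)
        (by
          simp (disch := omega) only [Function.comp_apply, btFun_of_lt_of_le, btFun_of_lt_of_le']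
          omega) wrap
      omega
    · have := hg.descent_unique (s := n - m + j) (t := n - m) (by omega) (by omega)
        (by
          simp (disch := omega) only [Function.comp_apply, btFun_of_lt_of_le, btFun_of_lt_of_le']
          omega) wrap
      omega
  · rintro rfl
    exact inv_mul_mem_of_mul_eq (blockT_suffix_mul_eq_rotation hi hij hjn)
      blockT_mem_blockTranspositions

theorem inv_mul_prefix_mem_iff_of_suffix {u v : ℕ} (hi : 0 < i) (hij : i < j) (hjn : j < n)
    (hu : 0 < u) (huv : u < v) (hvn : v < n) :
    (blockT n i j n hij hjn le_rfl)⁻¹ * blockT n 0 u v hu huv hvn.le ∈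
      blockTranspositions n ↔ u = i ∧ v = j := by
  refine ⟨fun h => ?_, ?_⟩
  · have hg := isBlockFunOn_of_inv_mul_mem h
    have wrap : btFun i (n - j + i) n (btFun 0 u v (v - u + 1)) <
        btFun i (n - j + i) n (btFun 0 u v (v - u)) := by
      simp (disch := omega) only [btFun_of_lt_of_le, btFun_of_lt_of_le']
      unfold btFun; split_ifs <;> omega
    have second_descent {s : ℕ} (hs : s < n)
        (hds : btFun i (n - j + i) n (btFun 0 u v (s + 1)) <
          btFun i (n - j + i) n (btFun 0 u v s)) : s = v - u :=
      hg.descent_unique hs (by omega) hds wrap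
    rcases lt_trichotomy j v with hjv | rfl | hvj
    · exfalso
      rcases lt_trichotomy j u with hju | rfl | huj
      · have := second_descent (s := j + v - u) (by omega) (by
          simp (disch := omega) only [btFun_of_lt_of_le, btFun_of_lt_of_le']
          omega)
        omega
      · have := second_descent (s := v) hvn (by
          simp (disch := omega) only [btFun_of_lt_of_le, btFun_of_lt_of_le', btFun_of_lt]
          omega)
        omega
      · have := second_descent (s := j - u) (by omega) (by
          simp (disch := omega) only [btFun_of_lt_of_le, btFun_of_lt_of_le']
          omega)
        omega
    · rcases lt_trichotomy u i with hui | rfl | hiu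
      · -- only one descent here, but breakpoints at `0`, `i - u`, `j - u` and `j`
        refine (hg.not_four_breakpoints (s₁ := 0) (s₂ := i - u) (s₃ := j - u) (s₄ := j)
          (by omega) (by omega) (by omega) hjn ?_ ?_ ?_ ?_).elim
        all_goals
          simp (disch := omega) only [Function.comp_apply, btFun_of_le, btFun_of_lt_of_le,
            btFun_of_lt_of_le', btFun_of_lt]
          omega
      · exact ⟨rfl, rfl⟩
      · have := second_descent (s := j) hjn (by
          simp (disch := omega) only [btFun_of_lt_of_le, btFun_of_lt_of_le', btFun_of_lt]
          omega)
        omega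
    · have := second_descent (s := j) hjn (by
        simp (disch := omega) only [btFun_of_lt_of_le, btFun_of_lt_of_le', btFun_of_lt]
        omega)
      omega
  · rintro ⟨rfl, rfl⟩
    exact inv_mul_mem_of_mul_eq (blockT_suffix_mul_rotation_eq_prefix hu hij hjn)
      blockT_mem_blockTranspositions

end adjacency

theorem SimpleGraph.ncard_adj_eq_one {V : Type*} {G : SimpleGraph V} {S : Set V} {v w : V}
    (hw : w ∈ S) (hvw : G.Adj v w) (huniq : ∀ x ∈ S, G.Adj v x → x = w) :
    {x | x ∈ S ∧ G.Adj v x}.ncard = 1 :=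
  Set.ncard_eq_one.mpr
    ⟨w, Set.eq_singleton_iff_unique_mem.mpr ⟨⟨hw, hvw⟩, fun x hx => huniq x hx.1 hx.2⟩⟩

section neighbors

variable {n : ℕ} {σ : Equiv.Perm (Fin n)}

theorem ncard_adj_Bset_of_mem_Lset (hσ : σ ∈ Lset n) :
    {τ | τ ∈ Bset n ∧ (cayleyT n).Adj σ τ}.ncard = 1 := by
  obtain ⟨j, k, hj, hjk, hkn, hk, rfl⟩ := hσ
  have hkn : k < n := lt_of_le_of_ne hkn hk
  refine SimpleGraph.ncard_adj_eq_one (w := blockT n 0 j n hj (by omega) le_rfl) ⟨j, hj, _, rfl⟩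
    ⟨fun h => hk (blockT_inj h).2.2,
      (inv_mul_rotation_mem_iff_of_prefix hj hjk hkn _ _).mpr rfl⟩ ?_
  rintro _ ⟨m, hm, hmn, rfl⟩ ⟨-, hadj⟩
  obtain rfl := (inv_mul_rotation_mem_iff_of_prefix hj hjk hkn hm hmn).mp hadj
  rfl

theorem ncard_adj_Bset_of_mem_Fset (hσ : σ ∈ Fset n) :
    {τ | τ ∈ Bset n ∧ (cayleyT n).Adj σ τ}.ncard = 1 := by
  obtain ⟨i, j, hij, hjn, hi, rfl⟩ := hσ
  have hi : 0 < i := Nat.pos_of_ne_zero hi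
  refine SimpleGraph.ncard_adj_eq_one (w := blockT n 0 j n (by omega) hjn le_rfl)
    ⟨j, _, hjn, rfl⟩ ⟨fun h => hi.ne' (blockT_inj h).1,
      (inv_mul_rotation_mem_iff_of_suffix hi hij hjn _ _).mpr rfl⟩ ?_
  rintro _ ⟨m, hm, hmn, rfl⟩ ⟨-, hadj⟩
  obtain rfl := (inv_mul_rotation_mem_iff_of_suffix hi hij hjn hm hmn).mp hadj
  rfl

theorem ncard_adj_Lset_of_mem_Fset (hσ : σ ∈ Fset n) :
    {τ | τ ∈ Lset n ∧ (cayleyT n).Adj σ τ}.ncard = 1 := by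
  obtain ⟨i, j, hij, hjn, hi, rfl⟩ := hσ
  have hi : 0 < i := Nat.pos_of_ne_zero hi
  refine SimpleGraph.ncard_adj_eq_one (w := blockT n 0 i j hi hij hjn.le)
    ⟨i, j, hi, hij, hjn.le, hjn.ne, rfl⟩
    ⟨fun h => hi.ne' (blockT_inj h).1,
      (inv_mul_prefix_mem_iff_of_suffix hi hij hjn hi hij hjn).mpr ⟨rfl, rfl⟩⟩ ?_
  rintro _ ⟨u, v, hu, huv, hvn, hv, rfl⟩ ⟨-, hadj⟩
  obtain ⟨rfl, rfl⟩ :=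
    (inv_mul_prefix_mem_iff_of_suffix hi hij hjn hu huv (lt_of_le_of_ne hvn hv)).mp hadj
  rfl

theorem ncard_adj_Fset_of_mem_Lset (hσ : σ ∈ Lset n) :
    {τ | τ ∈ Fset n ∧ (cayleyT n).Adj σ τ}.ncard = 1 := by
  obtain ⟨u, v, hu, huv, hvn, hv, rfl⟩ := hσ
  have hvn : v < n := lt_of_le_of_ne hvn hv
  refine SimpleGraph.ncard_adj_eq_one (w := blockT n u v n huv hvn le_rfl)
    ⟨u, v, huv, hvn, hu.ne', rfl⟩
    (SimpleGraph.Adj.symm ⟨fun h => hu.ne' (blockT_inj h).1,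
      (inv_mul_prefix_mem_iff_of_suffix hu huv hvn hu huv hvn).mpr ⟨rfl, rfl⟩⟩) ?_
  rintro _ ⟨i, j, hij, hjn, hi, rfl⟩ hadj
  obtain ⟨rfl, rfl⟩ := (inv_mul_prefix_mem_iff_of_suffix (Nat.pos_of_ne_zero hi) hij hjn hu huv
    hvn).mp hadj.symm.2
  rfl

end neighbors

theorem ncard_adj_Lset_of_rotation {n u : ℕ} (hu : 0 < u) (hun : u < n) :
    {τ | τ ∈ Lset n ∧ (cayleyT n).Adj (blockT n 0 u n hu hun le_rfl) τ}.ncard =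
      n - u - 1 := by
  rw [← Set.ncard_Ioo_nat]
  symm
  refine Set.ncard_congr (fun k hk => blockT n 0 u k hu hk.1 hk.2.le) (fun k hk => ?_)
    (fun _ _ _ _ h => (blockT_inj h).2.2) ?_
  · exact ⟨⟨u, k, hu, hk.1, hk.2.le, hk.2.ne, rfl⟩, SimpleGraph.Adj.symm
      ⟨fun h => hk.2.ne (blockT_inj h).2.2,
        (inv_mul_rotation_mem_iff_of_prefix hu hk.1 hk.2 hu hun).mpr rfl⟩⟩
  · rintro _ ⟨⟨p, q, hp, hpq, hqn, hq, rfl⟩, hadj⟩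
    have hqn : q < n := lt_of_le_of_ne hqn hq
    obtain rfl := (inv_mul_rotation_mem_iff_of_prefix hp hpq hqn hu hun).mp hadj.symm.2
    exact ⟨q, ⟨hpq, hqn⟩, rfl⟩

theorem ncard_adj_Fset_of_rotation {n u : ℕ} (hu : 0 < u) (hun : u < n) :
    {τ | τ ∈ Fset n ∧ (cayleyT n).Adj (blockT n 0 u n hu hun le_rfl) τ}.ncard = u - 1 := by
  rw [show u - 1 = (Set.Ioo 0 u).ncard by simp]
  symm
  refine Set.ncard_congr (fun i hi => blockT n i u n hi.2 hun le_rfl) (fun i hi => ?_)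
    (fun _ _ _ _ h => (blockT_inj h).1) ?_
  · exact ⟨⟨i, u, hi.2, hun, hi.1.ne', rfl⟩, SimpleGraph.Adj.symm
      ⟨fun h => hi.1.ne' (blockT_inj h).1,
        (inv_mul_rotation_mem_iff_of_suffix hi.1 hi.2 hun hu hun).mpr rfl⟩⟩
  · rintro _ ⟨⟨p, q, hpq, hqn, hp, rfl⟩, hadj⟩
    have hp : 0 < p := Nat.pos_of_ne_zero hp
    obtain rfl := (inv_mul_rotation_mem_iff_of_suffix hp hpq hqn hu hun).mp hadj.symm.2
    exact ⟨p, ⟨hp, hpq⟩, rfl⟩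

theorem ncard_adj_Lset_union_Fset_of_mem_Bset {n : ℕ} {σ : Equiv.Perm (Fin n)}
    (hσ : σ ∈ Bset n) :
    {τ | τ ∈ Lset n ∪ Fset n ∧ (cayleyT n).Adj σ τ}.ncard = n - 2 := by
  obtain ⟨u, hu, hun, rfl⟩ := hσ
  have hdisj : Disjoint {τ | τ ∈ Lset n ∧ (cayleyT n).Adj (blockT n 0 u n hu hun le_rfl) τ}
      {τ | τ ∈ Fset n ∧ (cayleyT n).Adj (blockT n 0 u n hu hun le_rfl) τ} := by
    rw [Set.disjoint_left]
    rintro _ ⟨⟨j, k, hj, hjk, hkn, hk, rfl⟩, -⟩ ⟨⟨i, j', hij, hjn, hi, h⟩, -⟩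
    exact hi (blockT_inj h).1
  simp_rw [Set.mem_union, Set.sep_union]
  rw [Set.ncard_union_eq hdisj, ncard_adj_Lset_of_rotation hu hun,
    ncard_adj_Fset_of_rotation hu hun]
  omega

theorem stmt_12_general (n : ℕ) :
    (∀ σ ∈ Lset n ∪ Fset n,
      {τ | τ ∈ Bset n ∧ σ ≠ τ ∧ σ⁻¹ * τ ∈ blockTranspositions n}.ncard = 1) ∧
    (∀ σ ∈ Bset n,
      {τ | τ ∈ Lset n ∪ Fset n ∧ σ ≠ τ ∧ σ⁻¹ * τ ∈ blockTranspositions n}.ncard = n - 2) ∧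
    (∀ σ ∈ Fset n,
      {τ | τ ∈ Lset n ∧ σ ≠ τ ∧ σ⁻¹ * τ ∈ blockTranspositions n}.ncard = 1) ∧
    (∀ σ ∈ Lset n,
      {τ | τ ∈ Fset n ∧ σ ≠ τ ∧ σ⁻¹ * τ ∈ blockTranspositions n}.ncard = 1) :=
  ⟨fun _ hσ => hσ.elim ncard_adj_Bset_of_mem_Lset ncard_adj_Bset_of_mem_Fset,
    fun _ => ncard_adj_Lset_union_Fset_of_mem_Bset, fun _ => ncard_adj_Lset_of_mem_Fset,
    fun _ => ncard_adj_Fset_of_mem_Lset⟩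

/-- For `n ≥ 4`, in the block transposition graph `Γ`: every vertex
in `L ∪ F` has exactly one neighbor in `B`; every vertex in `B` has exactly `n-2`
neighbors in `L ∪ F`; every vertex in `F` has exactly one neighbor in `L`; and every
vertex in `L` has exactly one neighbor in `F`. -/
theorem stmt_12 (n : ℕ) (hn : 4 ≤ n) :
    (∀ σ ∈ Lset n ∪ Fset n,
      {τ | τ ∈ Bset n ∧ σ ≠ τ ∧ σ⁻¹ * τ ∈ blockTranspositions n}.ncard = 1) ∧
    (∀ σ ∈ Bset n,
      {τ | τ ∈ Lset n ∪ Fset n ∧ σ ≠ τ ∧ σ⁻¹ * τ ∈ blockTranspositions n}.ncard = n - 2) ∧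
    (∀ σ ∈ Fset n,
      {τ | τ ∈ Lset n ∧ σ ≠ τ ∧ σ⁻¹ * τ ∈ blockTranspositions n}.ncard = 1) ∧
    (∀ σ ∈ Lset n,
      {τ | τ ∈ Fset n ∧ σ ≠ τ ∧ σ⁻¹ * τ ∈ blockTranspositions n}.ncard = 1) :=
  stmt_12_general n
end

section
/- Let n ≥ 5. The subgroup of Sym_n generated by the permutations in V equals the alternating group Alt_n if n is even, and equals the full symmetric group Sym_n if n is odd. -/
/-- The pair `e_m`, `0 ≤ m ≤ n`. -/
def epair (n : ℕ) (hn : 5 ≤ n) (m : ℕ) (hm : m ≤ n) : Set (Equiv.Perm (Fin n)) :=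
  if h : m ≤ n - 3 then
    {blockT n m (m + 1) (m + 3) (by omega) (by omega) (by omega),
     blockT n m (m + 2) (m + 3) (by omega) (by omega) (by omega)}
  else if h2 : m = n - 2 then
    {blockT n 0 (n - 2) (n - 1) (by omega) (by omega) (by omega),
     blockT n 0 (n - 2) n (by omega) (by omega) (by omega)}
  else if h3 : m = n - 1 then
    {blockT n 1 (n - 1) n (by omega) (by omega) (by omega),
     blockT n 0 1 (n - 1) (by omega) (by omega) (by omega)}
  else
    {blockT n 0 2 n (by omega) (by omega) (by omega),
     blockT n 1 2 n (by omega) (by omega) (by omega)}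

/-- `V`: the set of the `2(n+1)` endpoints of the pairs `e_0, …, e_n`. -/
def Vset (n : ℕ) (hn : 5 ≤ n) : Set (Equiv.Perm (Fin n)) :=
  {π | ∃ (m : ℕ) (hm : m ≤ n), π ∈ epair n hn m hm}


open Equiv Equiv.Perm

section BlockTranspositions

variable {n : ℕ}

theorem blockT_apply_val (i j k : ℕ) (hij : i < j) (hjk : j < k) (hkn : k ≤ n) (t : Fin n) :
    (blockT n i j k hij hjk hkn t : ℕ) = btFun i j k (t + 1) - 1 := rfl

theorem swap_apply_val (a b : ℕ) (ha : a < n) (hb : b < n) (t : Fin n) :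
    (swap (⟨a, ha⟩ : Fin n) ⟨b, hb⟩ t : ℕ) =
      if (t : ℕ) = a then b else if (t : ℕ) = b then a else t := by
  rw [swap_apply_def]
  split_ifs <;> simp_all [Fin.ext_iff]

theorem Fin.cycleRange_apply_val (c t : Fin n) :
    (Fin.cycleRange c t : ℕ) =
      if (t : ℕ) < c then (t : ℕ) + 1 else if (t : ℕ) = c then 0 else t := by
  rcases lt_trichotomy t c with h | rfl | h
  · rw [Fin.coe_cycleRange_of_lt h, if_pos (Fin.lt_def.mp h)]
  · rw [Fin.coe_cycleRange_of_le le_rfl, if_pos rfl, if_neg (lt_irrefl _), if_pos rfl]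
  · rw [Fin.cycleRange_of_gt h, if_neg (by omega), if_neg (by omega)]

theorem blockT_rot_mul_blockT {i j k : ℕ} (hij : i < j) (hjk : j + 1 < k) (hkn : k ≤ n) :
    blockT n i (i + 1) k (by omega) (by omega) hkn * blockT n i j k hij (by omega) hkn =
      blockT n i (j + 1) k (by omega) hjk hkn := by
  ext t
  simp only [Perm.mul_apply, blockT_apply_val]
  unfold btFun
  split_ifs <;> omega

theorem cycleRange_mul_blockT_rot {i k : ℕ} (hik : i + 1 < k) (hkn : k ≤ n) :
    Fin.cycleRange (⟨i, by omega⟩ : Fin n) * blockT n i (i + 1) k (by omega) hik hkn =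
      Fin.cycleRange ⟨k - 1, by omega⟩ := by
  ext t
  simp only [Perm.mul_apply, blockT_apply_val, Fin.cycleRange_apply_val]
  unfold btFun
  split_ifs <;> omega

theorem sign_blockT_rot {i k : ℕ} (hik : i + 1 < k) (hkn : k ≤ n) :
    sign (blockT n i (i + 1) k (by omega) hik hkn) = (-1) ^ (k - 1 - i) := by
  have h := congrArg sign (cycleRange_mul_blockT_rot hik hkn)
  rw [map_mul, Fin.sign_cycleRange, Fin.sign_cycleRange] at h
  refine mul_left_cancel (h.trans ?_)
  rw [← pow_add]
  congr 1
  dsimp only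
  omega

theorem sign_blockT {i j k : ℕ} (hij : i < j) (hjk : j < k) (hkn : k ≤ n) :
    sign (blockT n i j k hij hjk hkn) = (-1) ^ ((j - i) * (k - j)) := by
  induction j, (show i + 1 ≤ j from hij) using Nat.le_induction with
  | base =>
    rw [sign_blockT_rot hjk hkn, Nat.add_sub_cancel_left, one_mul]
    congr 1
    omega
  | succ j hj ih =>
    rw [← blockT_rot_mul_blockT hj hjk hkn, map_mul, sign_blockT_rot (by omega) hkn,
      ih hj (by omega), ← pow_add]
    refine neg_one_pow_congr ?_
    rw [Nat.even_add, Nat.even_mul, Nat.even_mul]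
    simp only [Nat.even_iff]
    omega

theorem blockT_mem_alternatingGroup_iff {i j k : ℕ} (hij : i < j) (hjk : j < k) (hkn : k ≤ n) :
    blockT n i j k hij hjk hkn ∈ alternatingGroup (Fin n) ↔ Even ((j - i) * (k - j)) := by
  rw [mem_alternatingGroup, sign_blockT, neg_one_pow_eq_one_iff_even (by decide)]

end BlockTranspositions

theorem Subgroup.mem_normalizer_closure_of_conj_mem {G : Type*} [Group G] {s : Set G} {g : G}
    (h : ∀ x ∈ s, g * x * g⁻¹ ∈ closure s) (h' : ∀ x ∈ s, g⁻¹ * x * g ∈ closure s) :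
    g ∈ normalizer (closure s : Set G) := by
  have map_le : ∀ g : G, (∀ x ∈ s, g * x * g⁻¹ ∈ closure s) →
      (closure s).map (MulAut.conj g).toMonoidHom ≤ closure s := fun g hg => by
    rw [MonoidHom.map_closure, closure_le]
    rintro _ ⟨x, hx, rfl⟩
    exact hg x hx
  rw [mem_normalizer_iff_map_conj_eq]
  refine le_antisymm (map_le g h) fun x hx => ⟨g⁻¹ * x * g, ?_, by simp [mul_assoc]⟩
  exact map_le g⁻¹ (by simpa using h') ⟨x, hx, by simp⟩

theorem Equiv.Perm.eq_top_of_alternatingGroup_le {α : Type*} [Fintype α] [DecidableEq α]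
    {K : Subgroup (Perm α)} (hK : alternatingGroup α ≤ K) {g : Perm α} (hgK : g ∈ K)
    (hg : g ∉ alternatingGroup α) : K = ⊤ := by
  have hsign : sign g = -1 := (Int.units_eq_one_or _).resolve_left hg
  refine (Subgroup.eq_top_iff' K).mpr fun σ => ?_
  rcases Int.units_eq_one_or (sign σ) with h | h
  · exact hK h
  · have hσg : σ * g⁻¹ ∈ alternatingGroup α := by
      rw [mem_alternatingGroup, map_mul, map_inv, h, hsign]
      decide
    simpa using K.mul_mem (hK hσg) hgK

section ConsecutiveThreeCycles

open Subgroup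

variable {n : ℕ}

def consecutiveThreeCycles (n : ℕ) : Set (Perm (Fin n)) :=
  {π | ∃ (a : ℕ) (h : a + 3 ≤ n), blockT n a (a + 1) (a + 3) (by omega) (by omega) h = π}

theorem blockT_mem_consecutiveThreeCycles (a : ℕ) (h : a + 3 ≤ n) :
    blockT n a (a + 1) (a + 3) (by omega) (by omega) h ∈ consecutiveThreeCycles n :=
  ⟨a, h, rfl⟩

theorem blockT_consecutive_eq_swap_mul_swap (a : ℕ) (h : a + 3 ≤ n) :
    blockT n a (a + 1) (a + 3) (by omega) (by omega) h =
      swap ⟨a, by omega⟩ ⟨a + 1, by omega⟩ * swap ⟨a + 1, by omega⟩ ⟨a + 2, by omega⟩ := by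
  ext t
  simp only [Perm.mul_apply, blockT_apply_val, swap_apply_val]
  unfold btFun
  split_ifs <;> omega

theorem isThreeCycle_blockT_consecutive (a : ℕ) (h : a + 3 ≤ n) :
    IsThreeCycle (blockT n a (a + 1) (a + 3) (by omega) (by omega) h) := by
  rw [blockT_consecutive_eq_swap_mul_swap, swap_comm]
  exact isThreeCycle_swap_mul_swap_same (by simp) (by simp) (by simp)

theorem swap_succ_mem_closure_insert_swap_zero_one (h : 2 ≤ n) (a : ℕ) (ha : a + 1 < n) :
    swap (⟨a, by omega⟩ : Fin n) ⟨a + 1, ha⟩ ∈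
      closure (insert (swap ⟨0, by omega⟩ ⟨1, by omega⟩) (consecutiveThreeCycles n)) := by
  induction a with
  | zero => exact Subgroup.subset_closure (Set.mem_insert _ _)
  | succ a ih =>
    have hc := Subgroup.subset_closure (k := insert (swap ⟨0, by omega⟩ ⟨1, by omega⟩) _)
      (Set.mem_insert_of_mem _ (blockT_mem_consecutiveThreeCycles a (n := n) (by omega)))
    rw [blockT_consecutive_eq_swap_mul_swap] at hc
    simpa only [swap_mul_self_mul] using mul_mem (ih (by omega)) hc

theorem closure_insert_swap_zero_one_eq_top (h : 2 ≤ n) :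
    closure (insert (swap ⟨0, by omega⟩ ⟨1, by omega⟩) (consecutiveThreeCycles n)) = ⊤ := by
  obtain ⟨m, rfl⟩ : ∃ m, n = m + 1 := ⟨n - 1, by omega⟩
  rw [eq_top_iff, ← closure_eq_top_of_mclosure_eq_top (mclosure_swap_castSucc_succ m),
    closure_le]
  rintro _ ⟨i, rfl⟩
  exact swap_succ_mem_closure_insert_swap_zero_one h i (by omega)

theorem swap_zero_one_conj_blockT_zero (h : 3 ≤ n) :
    swap (⟨0, by omega⟩ : Fin n) ⟨1, by omega⟩ * blockT n 0 1 3 (by omega) (by omega) h *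
        swap ⟨0, by omega⟩ ⟨1, by omega⟩ =
      (blockT n 0 1 3 (by omega) (by omega) h)⁻¹ := by
  ext t
  simp only [Perm.mul_apply, blockT_inv, blockT_apply_val, swap_apply_val]
  unfold btFun
  split_ifs <;> first | contradiction | omega

theorem swap_zero_one_conj_blockT_one (h : 4 ≤ n) :
    swap (⟨0, by omega⟩ : Fin n) ⟨1, by omega⟩ * blockT n 1 2 4 (by omega) (by omega) h *
        swap ⟨0, by omega⟩ ⟨1, by omega⟩ =
      (blockT n 0 1 3 (by omega) (by omega) (by omega))⁻¹ *
        blockT n 1 2 4 (by omega) (by omega) h := by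
  ext t
  simp only [Perm.mul_apply, blockT_inv, blockT_apply_val, swap_apply_val]
  unfold btFun
  split_ifs <;> first | contradiction | omega

theorem swap_conj_blockT_of_lt {x y i j k : ℕ} (hxi : x < i) (hyi : y < i) (hij : i < j)
    (hjk : j < k) (hkn : k ≤ n) :
    swap (⟨x, by omega⟩ : Fin n) ⟨y, by omega⟩ * blockT n i j k hij hjk hkn *
        swap ⟨x, by omega⟩ ⟨y, by omega⟩ =
      blockT n i j k hij hjk hkn := by
  ext t
  simp only [Perm.mul_apply, blockT_apply_val, swap_apply_val]
  unfold btFun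
  split_ifs <;> omega

theorem swap_zero_one_mem_normalizer_closure_consecutiveThreeCycles (h : 3 ≤ n) :
    swap (⟨0, by omega⟩ : Fin n) ⟨1, by omega⟩ ∈
      normalizer (closure (consecutiveThreeCycles n) : Set (Perm (Fin n))) := by
  have hconj : ∀ x ∈ consecutiveThreeCycles n, swap (⟨0, by omega⟩ : Fin n) ⟨1, by omega⟩ * x *
      swap ⟨0, by omega⟩ ⟨1, by omega⟩ ∈ closure (consecutiveThreeCycles n) := by
    rintro _ ⟨a, ha, rfl⟩
    have mem (b : ℕ) (hb : b + 3 ≤ n) := Subgroup.subset_closure (k := consecutiveThreeCycles n)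
      (blockT_mem_consecutiveThreeCycles b hb)
    rcases a with _ | _ | a
    · rw [swap_zero_one_conj_blockT_zero]
      exact inv_mem (mem 0 h)
    · rw [swap_zero_one_conj_blockT_one]
      exact mul_mem (inv_mem (mem 0 h)) (mem 1 ha)
    · rw [swap_conj_blockT_of_lt (by omega) (by omega)]
      exact mem (a + 2) ha
  exact mem_normalizer_closure_of_conj_mem (by simpa only [swap_inv] using hconj)
    (by simpa only [swap_inv] using hconj)

theorem closure_consecutiveThreeCycles_normal (h : 3 ≤ n) :
    (closure (consecutiveThreeCycles n)).Normal := by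
  rw [← normalizer_eq_top_iff, eq_top_iff, ← closure_insert_swap_zero_one_eq_top (by omega),
    closure_le, Set.insert_subset_iff]
  exact ⟨swap_zero_one_mem_normalizer_closure_consecutiveThreeCycles h,
    Subgroup.subset_closure.trans le_normalizer⟩

theorem closure_consecutiveThreeCycles (h : 3 ≤ n) :
    closure (consecutiveThreeCycles n) = alternatingGroup (Fin n) := by
  refine le_antisymm ?_ ?_
  · rw [closure_le]
    rintro _ ⟨a, ha, rfl⟩
    exact (isThreeCycle_blockT_consecutive a ha).mem_alternatingGroup
  · rw [← closure_three_cycles_eq_alternating, closure_le]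
    intro g hg
    have hc := isThreeCycle_blockT_consecutive 0 h
    obtain ⟨c, rfl⟩ := isConj_iff.mp (isConj_iff_cycleType_eq.mpr (hc.trans hg.symm))
    exact (closure_consecutiveThreeCycles_normal h).conj_mem _
      (Subgroup.subset_closure (blockT_mem_consecutiveThreeCycles 0 h)) c

end ConsecutiveThreeCycles

section Vset

variable {n : ℕ}

theorem consecutiveThreeCycles_subset_Vset (hn : 5 ≤ n) :
    consecutiveThreeCycles n ⊆ Vset n hn := by
  rintro _ ⟨a, ha, rfl⟩
  refine ⟨a, by omega, ?_⟩
  rw [epair, dif_pos (by omega)]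
  exact Set.mem_insert _ _

theorem blockT_zero_sub_two_sub_one_mem_Vset (hn : 5 ≤ n) :
    blockT n 0 (n - 2) (n - 1) (by omega) (by omega) (by omega) ∈ Vset n hn := by
  refine ⟨n - 2, by omega, ?_⟩
  rw [epair, dif_neg (by omega), dif_pos rfl]
  exact Set.mem_insert _ _

theorem Vset_subset_alternatingGroup (hn : 5 ≤ n) (he : Even n) :
    Vset n hn ⊆ alternatingGroup (Fin n) := by
  rw [Nat.even_iff] at he
  rintro π ⟨m, hm, hπ⟩
  unfold epair at hπ
  split_ifs at hπ <;> rcases hπ with rfl | rfl <;>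
    · rw [SetLike.mem_coe, blockT_mem_alternatingGroup_iff, Nat.even_mul, Nat.even_iff,
        Nat.even_iff]
      omega

end Vset

/-- For `n ≥ 5`, the subgroup of `Sym_n` generated by the
permutations in `V` is `Alt_n` if `n` is even and `Sym_n` if `n` is odd. -/
theorem stmt_19 (n : ℕ) (hn : 5 ≤ n) :
    (Even n → Subgroup.closure (Vset n hn) = alternatingGroup (Fin n)) ∧
    (Odd n → Subgroup.closure (Vset n hn) = ⊤) := by
  have hAlt : alternatingGroup (Fin n) ≤ Subgroup.closure (Vset n hn) := by
    rw [← closure_consecutiveThreeCycles (by omega)]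
    exact Subgroup.closure_mono (consecutiveThreeCycles_subset_Vset hn)
  refine ⟨fun he => le_antisymm ((Subgroup.closure_le _).mpr (Vset_subset_alternatingGroup hn he))
    hAlt, fun ho => eq_top_of_alternatingGroup_le hAlt
      (Subgroup.subset_closure (blockT_zero_sub_two_sub_one_mem_Vset hn)) ?_⟩
  rw [Nat.odd_iff] at ho
  rw [blockT_mem_alternatingGroup_iff, Nat.even_mul, Nat.even_iff, Nat.even_iff]
  omega
end
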